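/- Let X be a locally compact and locally path connected metric space and let G be a countable discrete group acting by homeomorphisms on X such that the orbit space X/G is metrizable. Then there exists a family {V_x}_{x∈X} of open subsets of X with x ∈ V_x for every x, satisfying: (A) V_{gx} = gV_x for every x ∈ X and g ∈ G; (B) if V_x ∩ V_{gx} ≠ ∅ then g ∈ G_x; (C) for every x ∈ X, every y ∈ V_x and every g ∈ G, if V_y ∩ V_{gx} ≠ ∅ then g ∈ G_x. -/

import Mathlib

open Pointwise Metric Set MulAction Filter Topology

/-!
Fix a metric on the orbit space and let `W(x, t)` (`ballComponent G x t`) be the connected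
component of `x` in the preimage of the `t`-ball about the orbit of `x`; these sets are open and
`W(gx, t) = g W(x, t)`. Call `W(x, t)` thin if it meets the orbit of `x` only in `x`. Baire's
theorem makes orbits discrete (`G` is countable, `X` locally compact), so the image of a small
compact sphere about `x` stays away from the orbit of `x`, and `W(x, t)` is thin for small `t`;
let `τ(x) ≤ 1` be the supremum of such `t`.

`τ` need not be locally bounded below, but it is along components: if `x ∈ W(y, τ(y)/3)`
and `τ(y) < δ` with `W(x, 3δ)` thin, then the non-thin `W(y, 2δ)` lies in `W(x, 3δ)`, so the
element of `G` witnessing non-thinness fixes `x`, hence maps `y` into the thin `W(y, τ(y)/3)`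
and fixes `y` after all. Thus `ρ(x) = inf {τ(y) | x ∈ W(y, τ(y)/3)}` is positive, and
`V_x = W(x, ρ(x)/3)` works: for `y ∈ V_x` we get `ρ(y) ≤ τ(x)`, so `V_y ⊆ W(x, 2τ(x)/3)` and
`V_{gx} ⊆ W(gx, 2τ(x)/3)`; these components of one set meet, hence coincide, and thinness
gives `gx = x`.
-/

noncomputable local instance {G X : Type*} [Group G] [MulAction G X] [TopologicalSpace X]
    [TopologicalSpace.MetrizableSpace (orbitRel.Quotient G X)] :
    MetricSpace (orbitRel.Quotient G X) :=
  TopologicalSpace.metrizableSpaceMetric _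

section Isolation

variable {G X : Type*} [Group G] [MulAction G X] [TopologicalSpace X]

lemma MulAction.isClosed_orbit [T1Space (orbitRel.Quotient G X)] (x : X) :
    IsClosed (orbit G x) := by
  have : orbit G x = Quotient.mk (orbitRel G X) ⁻¹' {Quotient.mk _ x} := by
    ext y
    simp only [mem_preimage, mem_singleton_iff, Quotient.eq, orbitRel_apply]
  rw [this]
  exact isClosed_singleton.preimage continuous_quotient_mk'

lemma MulAction.eventually_eq_of_mem_orbit [Countable G] [T2Space X] [LocallyCompactSpace X]
    [ContinuousConstSMul G X] {x : X} (hclosed : IsClosed (orbit G x)) :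
    ∀ᶠ y in 𝓝 x, y ∈ orbit G x → y = x := by
  have := hclosed.isClosedEmbedding_subtypeVal.locallyCompactSpace
  have : Nonempty (orbit G x) := ⟨⟨x, mem_orbit_self x⟩⟩
  let pt (g : G) : orbit G x := ⟨g • x, mem_orbit x g⟩
  have hcover : ⋃ g : G, {pt g} = univ :=
    eq_univ_of_forall fun ⟨_, g, hg⟩ => mem_iUnion.mpr ⟨g, Subtype.ext hg.symm⟩
  -- Baire: some `g • x` is isolated in the orbit; translating by `g⁻¹` isolates `x`.
  obtain ⟨g, hg⟩ := nonempty_interior_of_iUnion_of_closed (fun _ => isClosed_singleton) hcover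
  have hopen : IsOpen {pt g} := by
    rw [← (hg.subset_singleton_iff.mp interior_subset)]
    exact isOpen_interior
  obtain ⟨U, hU, hUg⟩ := isOpen_induced_iff.mp hopen
  have hgU : g • x ∈ U := (hUg.symm ▸ rfl : pt g ∈ Subtype.val ⁻¹' U)
  filter_upwards [(hU.smul g⁻¹).mem_nhds (mem_inv_smul_set_iff.mpr hgU)] with y hy hyx
  obtain ⟨h, rfl⟩ := hyx
  have hmem : (⟨g • h • x, g * h, mul_smul g h x⟩ : orbit G x) ∈ Subtype.val ⁻¹' U :=
    mem_inv_smul_set_iff.mp hy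
  rw [hUg, mem_singleton_iff, Subtype.ext_iff] at hmem
  exact smul_left_cancel g hmem

end Isolation

section QuotientMk

variable {G X : Type*} [Group G] [MulAction G X]

lemma smul_preimage_quotientMk (g : G) (A : Set (orbitRel.Quotient G X)) :
    g • (Quotient.mk (orbitRel G X) ⁻¹' A) = Quotient.mk (orbitRel G X) ⁻¹' A := by
  ext y
  simp only [mem_smul_set_iff_inv_smul_mem, mem_preimage, orbitRel.Quotient.quotient_smul_eq]

end QuotientMk

section BallComponent

variable {G X : Type*} [Group G] [MulAction G X] [TopologicalSpace X]
  [TopologicalSpace.MetrizableSpace (orbitRel.Quotient G X)]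

local notation "π" => Quotient.mk (orbitRel G X)

variable (G) in
def ballComponent (x : X) (t : ℝ) : Set X :=
  connectedComponentIn (π ⁻¹' ball (π x) t) x

variable {x y z : X} {s t : ℝ}

lemma isPreconnected_ballComponent : IsPreconnected (ballComponent G x t) :=
  isPreconnected_connectedComponentIn

lemma isOpen_ballComponent [LocallyConnectedSpace X] : IsOpen (ballComponent G x t) :=
  (isOpen_ball.preimage continuous_quotient_mk').connectedComponentIn

lemma mem_ballComponent_self (ht : 0 < t) : x ∈ ballComponent G x t :=
  mem_connectedComponentIn (mem_ball_self ht)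

lemma dist_lt_of_mem_ballComponent (hy : y ∈ ballComponent G x t) : dist (π y) (π x) < t :=
  connectedComponentIn_subset _ x hy

lemma ballComponent_mono (h : s ≤ t) : ballComponent G x s ⊆ ballComponent G x t :=
  connectedComponentIn_mono x (preimage_mono (ball_subset_ball h))

lemma ballComponent_subset (hzx : z ∈ ballComponent G x s) (hzy : z ∈ ballComponent G y t)
    (h : ball (π y) t ⊆ ball (π x) s) : ballComponent G y t ⊆ ballComponent G x s := by
  unfold ballComponent at hzx ⊢
  rw [connectedComponentIn_eq hzx]
  exact isPreconnected_ballComponent.subset_connectedComponentIn hzy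
    ((connectedComponentIn_subset _ _).trans (preimage_mono h))

lemma ballComponent_smul [ContinuousConstSMul G X] (g : G) (x : X) (t : ℝ) :
    ballComponent G (g • x) t = g • ballComponent G x t := by
  have hF : g • (π ⁻¹' ball (π x) t) = π ⁻¹' ball (π (g • x)) t := by
    rw [smul_preimage_quotientMk, orbitRel.Quotient.quotient_smul_eq]
  by_cases hx : x ∈ π ⁻¹' ball (π x) t
  · rw [ballComponent, ballComponent, ← hF, ← image_smul, ← image_smul,
      ← Homeomorph.smul_apply]
    exact ((Homeomorph.smul g).image_connectedComponentIn hx).symm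
  · have hgx : g • x ∉ π ⁻¹' ball (π (g • x)) t := by
      rwa [← hF, smul_mem_smul_set_iff]
    rw [ballComponent, ballComponent, connectedComponentIn_eq_empty hx,
      connectedComponentIn_eq_empty hgx, smul_set_empty]

lemma smul_mem_ballComponent_of_inter_nonempty {g : G}
    (h : (ballComponent G x t ∩ ballComponent G (g • x) t).Nonempty) :
    g • x ∈ ballComponent G x t := by
  obtain ⟨u, hux, hugx⟩ := h
  have hgx : π (g • x) = π x := orbitRel.Quotient.quotient_smul_eq
  rw [ballComponent, hgx] at hugx
  rw [ballComponent, connectedComponentIn_eq hux, ← connectedComponentIn_eq hugx]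
  exact mem_connectedComponentIn (connectedComponentIn_nonempty_iff.mp ⟨u, hugx⟩)

variable (G) in
def IsThin (x : X) (t : ℝ) : Prop :=
  ∀ g : G, g • x ∈ ballComponent G x t → g • x = x

lemma isThin_of_nonpos (ht : t ≤ 0) : IsThin G x t :=
  fun _ hg => absurd (dist_lt_of_mem_ballComponent hg) (ht.trans dist_nonneg).not_gt

lemma IsThin.mono (h : IsThin G x t) (hst : s ≤ t) : IsThin G x s :=
  fun g hg => h g (ballComponent_mono hst hg)

lemma IsThin.smul [ContinuousConstSMul G X] (h : IsThin G x t) (g : G) : IsThin G (g • x) t := by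
  intro k hk
  rw [ballComponent_smul, ← mul_smul, mem_smul_set_iff_inv_smul_mem, ← mul_smul] at hk
  have := h _ hk
  rwa [mul_smul, mul_smul, inv_smul_eq_iff] at this

lemma isThin_smul_iff [ContinuousConstSMul G X] (g : G) : IsThin G (g • x) t ↔ IsThin G x t :=
  ⟨fun h => by simpa using h.smul g⁻¹, fun h => h.smul g⟩

variable (G) in
noncomputable def thinRadius (x : X) : ℝ :=
  sSup {t | t ≤ 1 ∧ IsThin G x t}

lemma thinRadius_smul [ContinuousConstSMul G X] (g : G) (x : X) :
    thinRadius G (g • x) = thinRadius G x := by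
  simp only [thinRadius, isThin_smul_iff]

lemma bddAbove_isThin : BddAbove {t | t ≤ 1 ∧ IsThin G x t} :=
  ⟨1, fun _ ht => ht.1⟩

lemma thinRadius_nonneg : 0 ≤ thinRadius G x :=
  le_csSup bddAbove_isThin ⟨zero_le_one, isThin_of_nonpos le_rfl⟩

lemma IsThin.thinRadius_pos (h : IsThin G x t) (ht : 0 < t) : 0 < thinRadius G x :=
  (lt_min ht one_pos).trans_le
    (le_csSup bddAbove_isThin ⟨min_le_right _ _, h.mono (min_le_left _ _)⟩)

lemma isThin_of_lt_thinRadius (h : t < thinRadius G x) : IsThin G x t := by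
  obtain ⟨t', ⟨-, ht'⟩, htt'⟩ := exists_lt_of_lt_csSup
    (⟨0, zero_le_one, isThin_of_nonpos le_rfl⟩ : {t | t ≤ 1 ∧ IsThin G x t}.Nonempty) h
  exact ht'.mono htt'.le

lemma not_isThin_of_thinRadius_lt (h : thinRadius G x < t) (ht : t ≤ 1) : ¬IsThin G x t :=
  fun hthin => h.not_ge (le_csSup bddAbove_isThin ⟨ht, hthin⟩)

lemma exists_lt_thinRadius [ContinuousConstSMul G X] (hτ : 0 < thinRadius G x) :
    ∃ δ > 0, ∀ y, x ∈ ballComponent G y (thinRadius G y / 3) → δ < thinRadius G y := by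
  obtain ⟨η, hη, hthin⟩ : ∃ η > 0, IsThin G x η :=
    ⟨thinRadius G x / 2, by positivity, isThin_of_lt_thinRadius (by linarith)⟩
  obtain ⟨δ, hδ, hδη, hδ1⟩ : ∃ δ > 0, 3 * δ ≤ η ∧ 2 * δ ≤ 1 :=
    ⟨min (η / 3) (1 / 2), by positivity, by linarith [min_le_left (η / 3) (1 / 2)],
      by linarith [min_le_right (η / 3) (1 / 2)]⟩
  refine ⟨δ, hδ, fun y hxy => ?_⟩
  by_contra! hτy
  have hdist := dist_lt_of_mem_ballComponent hxy
  have hdist₀ := dist_nonneg (x := π x) (y := π y)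
  obtain ⟨g, hgy, hne⟩ :
      ∃ g : G, g • y ∈ ballComponent G y (2 * δ) ∧ g • y ≠ y := by
    simpa [IsThin] using not_isThin_of_thinRadius_lt (x := y) (by linarith) hδ1
  have hsub : ballComponent G y (2 * δ) ⊆ ballComponent G x η :=
    ballComponent_subset (mem_ballComponent_self hη) (ballComponent_mono (by linarith) hxy)
      (ball_subset_ball' (by rw [dist_comm]; linarith))
  have hgx : g • x = x := by
    refine hthin g (smul_mem_ballComponent_of_inter_nonempty ⟨g • y, hsub hgy, ?_⟩)
    rw [ballComponent_smul]
    exact smul_mem_smul_set (hsub (mem_ballComponent_self (by positivity)))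
  have hxgy : x ∈ ballComponent G (g • y) (thinRadius G y / 3) := by
    have := smul_mem_smul_set (a := g) hxy
    rwa [hgx, ← ballComponent_smul] at this
  exact hne (isThin_of_lt_thinRadius (by linarith) g
    (smul_mem_ballComponent_of_inter_nonempty ⟨x, hxy, hxgy⟩))

variable (G) in
noncomputable def adaptedRadius (x : X) : ℝ :=
  sInf (thinRadius G '' {y | x ∈ ballComponent G y (thinRadius G y / 3)})

lemma adaptedRadius_smul [ContinuousConstSMul G X] (g : G) (x : X) :
    adaptedRadius G (g • x) = adaptedRadius G x := by
  have : {y | g • x ∈ ballComponent G y (thinRadius G y / 3)} =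
      g • {y | x ∈ ballComponent G y (thinRadius G y / 3)} := by
    ext y
    simp only [mem_smul_set_iff_inv_smul_mem, mem_ofPred_eq, ballComponent_smul, thinRadius_smul,
      inv_inv]
  rw [adaptedRadius, adaptedRadius, this, ← image_smul, image_image]
  simp only [thinRadius_smul]

lemma adaptedRadius_le_of_mem (hy : y ∈ ballComponent G x (thinRadius G x / 3)) :
    adaptedRadius G y ≤ thinRadius G x :=
  csInf_le ⟨0, by rintro _ ⟨z, -, rfl⟩; exact thinRadius_nonneg⟩ ⟨x, hy, rfl⟩

lemma adaptedRadius_pos [ContinuousConstSMul G X] (hτ : 0 < thinRadius G x) :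
    0 < adaptedRadius G x := by
  obtain ⟨δ, hδ, hlt⟩ := exists_lt_thinRadius hτ
  refine hδ.trans_le (le_csInf ⟨_, x, mem_ballComponent_self (by positivity), rfl⟩ ?_)
  rintro _ ⟨y, hy, rfl⟩
  exact (hlt y hy).le

variable (G) in
noncomputable def adaptedComponent (x : X) : Set X :=
  ballComponent G x (adaptedRadius G x / 3)

lemma adaptedComponent_smul [ContinuousConstSMul G X] (g : G) (x : X) :
    adaptedComponent G (g • x) = g • adaptedComponent G x := by
  rw [adaptedComponent, adaptedComponent, adaptedRadius_smul, ballComponent_smul]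

lemma smul_eq_of_inter_adaptedComponent_nonempty [ContinuousConstSMul G X] {g : G}
    (hτ : 0 < thinRadius G x) (hr : 0 < adaptedRadius G y) (hy : y ∈ adaptedComponent G x)
    (h : (adaptedComponent G y ∩ adaptedComponent G (g • x)).Nonempty) : g • x = x := by
  have hrx := adaptedRadius_le_of_mem (mem_ballComponent_self (by positivity))
  have hry := adaptedRadius_le_of_mem (ballComponent_mono (by linarith) hy)
  have hdist := dist_lt_of_mem_ballComponent hy
  obtain ⟨u, huy, hugx⟩ := h
  rw [adaptedComponent, adaptedRadius_smul] at hugx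
  refine isThin_of_lt_thinRadius (t := 2 * thinRadius G x / 3) (by linarith) g
    (smul_mem_ballComponent_of_inter_nonempty ⟨u, ?_, ballComponent_mono (by linarith) hugx⟩)
  exact ballComponent_subset (ballComponent_mono (by linarith) hy)
    (mem_ballComponent_self (by positivity)) (ball_subset_ball' (by linarith)) huy

end BallComponent

section MetricSpace

variable {G X : Type*} [Group G] [MulAction G X] [MetricSpace X]
  [TopologicalSpace.MetrizableSpace (orbitRel.Quotient G X)]

local notation "π" => Quotient.mk (orbitRel G X)

lemma exists_isCompact_closedBall_orbit [Countable G] [LocallyCompactSpace X]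
    [ContinuousConstSMul G X] (x : X) :
    ∃ ε > 0, IsCompact (closedBall x ε) ∧
      ∀ g : G, dist (g • x) x ≤ ε → g • x = x := by
  obtain ⟨K, hK, hKx⟩ := exists_compact_mem_nhds x
  obtain ⟨ε, hε, hsub⟩ := nhds_basis_closedBall.mem_iff.mp
    (inter_mem hKx (eventually_eq_of_mem_orbit (isClosed_orbit (G := G) x)))
  exact ⟨ε, hε, hK.of_isClosed_subset isClosed_closedBall (hsub.trans inter_subset_left),
    fun g hg => (hsub (mem_closedBall.mpr hg)).2 (mem_orbit x g)⟩

lemma thinRadius_pos [Countable G] [LocallyCompactSpace X] [ContinuousConstSMul G X] (x : X) :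
    0 < thinRadius G x := by
  obtain ⟨ε, hε, hcpt, hiso⟩ := exists_isCompact_closedBall_orbit (G := G) x
  have hS : IsCompact (π '' sphere x (ε / 2)) :=
    (hcpt.of_isClosed_subset isClosed_sphere (sphere_subset_closedBall.trans
      (closedBall_subset_closedBall (by linarith)))).image continuous_quotient_mk'
  have hxS : π x ∉ π '' sphere x (ε / 2) := by
    rintro ⟨w, hw, hwx⟩
    obtain ⟨g, rfl⟩ := mem_orbit_iff.mp (orbitRel_apply.mp (Quotient.exact hwx))
    rw [mem_sphere] at hw
    rw [hiso g (by linarith), dist_self] at hw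
    linarith
  obtain ⟨η, hη, hball⟩ := isOpen_iff.mp hS.isClosed.isOpen_compl _ hxS
  refine IsThin.thinRadius_pos (t := η) (fun g hg => by_contra fun hne => ?_) hη
  have hfar : ε / 2 ≤ dist (g • x) x := by
    by_contra! h
    exact hne (hiso g (by linarith))
  obtain ⟨w, hw, hwx⟩ := isPreconnected_ballComponent.intermediate_value
    (mem_ballComponent_self hη) hg (continuous_id.dist continuous_const).continuousOn
    ⟨show dist x x ≤ ε / 2 by rw [dist_self]; positivity, hfar⟩
  exact hball (dist_lt_of_mem_ballComponent hw) ⟨w, hwx, rfl⟩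

end MetricSpace

/-- For a countable discrete group acting on a locally compact, locally path connected
metric space with metrizable orbit space, there is an equivariant family of open sets
`V_x ∋ x` satisfying (A), (B) and (C). -/
theorem stmt11 {G X : Type*} [Group G] [Countable G] [MetricSpace X]
    [LocallyCompactSpace X] [LocallyPathConnectedSpace X]
    [MulAction G X] [ContinuousConstSMul G X]
    [TopologicalSpace.MetrizableSpace (Quotient (MulAction.orbitRel G X))] :
    ∃ V : X → Set X,
      (∀ x : X, x ∈ V x) ∧
      (∀ x : X, IsOpen (V x)) ∧
      (∀ (x : X) (g : G), V (g • x) = g • V x) ∧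
      (∀ (x : X) (g : G), (V x ∩ V (g • x)).Nonempty → g • x = x) ∧
      (∀ (x : X) (g : G), ∀ y ∈ V x, (V y ∩ V (g • x)).Nonempty → g • x = x) := by
  have hr (x : X) : 0 < adaptedRadius G x := adaptedRadius_pos (thinRadius_pos x)
  have hmem (x : X) : x ∈ adaptedComponent G x := mem_ballComponent_self (by linarith [hr x])
  exact ⟨adaptedComponent G, hmem, fun _ => isOpen_ballComponent,
    fun x g => adaptedComponent_smul g x,
    fun x _ => smul_eq_of_inter_adaptedComponent_nonempty (thinRadius_pos x) (hr x) (hmem x),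
    fun x _ y hy => smul_eq_of_inter_adaptedComponent_nonempty (thinRadius_pos x) (hr y) hy⟩
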